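/- Let S be the semigroup presented by generators a, b, c, d and the single defining relation ab = cd, i.e. the quotient of the free semigroup on {a,b,c,d} by the smallest congruence identifying the words ab and cd. Then H²(S,A) = 0 for every S-module A. -/

import Mathlib

/-!
A 2-cocycle `F` on `S` with values in `A` makes `A × S` a semigroup under
`(a, s) (b, t) = (a + s b - F s t, s t)`, and `F` is a coboundary exactly when the projection
onto `S` has a multiplicative section. Since `S` is presented by generators and one relation, the
section exists as soon as the lifts `(0, x)` of the generators satisfy that relation, i.e. as soon
as `F a b = F c d`. Every cocycle can be brought into this form by subtracting the coboundary of
the 1-cochain supported at `a` with value `F a b - F c d`: because `a` differs from `b`, `c`, `d`,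
this shifts `F a b` by exactly that amount and leaves `F c d` alone.
-/

structure SgModule (S : Type) [Semigroup S] where
  carrier : Type
  [grp : AddCommGroup carrier]
  smul : S → carrier → carrier
  smul_add : ∀ s a b, smul s (a + b) = smul s a + smul s b
  mul_smul : ∀ s t a, smul (s * t) a = smul s (smul t a)

attribute [instance] SgModule.grp

/-- `altSign k a = (-1)^k • a`. -/
def altSign {A : Type} [AddCommGroup A] (k : ℕ) (a : A) : A :=
  if Even k then a else -a

lemma altSign_add {A : Type} [AddCommGroup A] (k : ℕ) (a b : A) :
    altSign k (a + b) = altSign k a + altSign k b := by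
  unfold altSign; split <;> [rfl; exact neg_add a b]

def mulContract {S : Type} [Mul S] {n : ℕ} (x : Fin (n + 1) → S) (i : Fin n) :
    Fin n → S := fun j =>
  if (j : ℕ) < (i : ℕ) then x j.castSucc
  else if (j : ℕ) = (i : ℕ) then x j.castSucc * x j.succ
  else x j.succ

namespace SgModule

variable {S : Type} [Semigroup S] (M : SgModule S)

abbrev cochain (n : ℕ) : Type := (Fin n → S) → M.carrier

def cobFun {n : ℕ} (f : M.cochain n) : M.cochain (n + 1) := fun x =>
  M.smul (x 0) (f (Fin.tail x))
    + (∑ i : Fin n, altSign ((i : ℕ) + 1) (f (mulContract x i)))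
    + altSign (n + 1) (f (Fin.init x))

lemma cobFun_add {n : ℕ} (f g : M.cochain n) :
    M.cobFun (f + g) = M.cobFun f + M.cobFun g := by
  funext x
  show M.cobFun (f + g) x = M.cobFun f x + M.cobFun g x
  unfold cobFun
  simp only [Pi.add_apply, altSign_add, M.smul_add]
  rw [Finset.sum_add_distrib]
  abel

def cob (n : ℕ) : M.cochain n →+ M.cochain (n + 1) :=
  AddMonoidHom.mk' M.cobFun M.cobFun_add

def cocycles (n : ℕ) : AddSubgroup (M.cochain n) := (M.cob n).ker

def cobounds : (n : ℕ) → AddSubgroup (M.cochain n)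
  | 0 => ⊥
  | n + 1 => (M.cob n).range

def cohomology (n : ℕ) : Type :=
  M.cocycles n ⧸ (M.cobounds n).addSubgroupOf (M.cocycles n)

noncomputable instance (n : ℕ) : AddCommGroup (M.cohomology n) := by
  unfold cohomology; infer_instance

end SgModule

noncomputable def cohDim (S : Type) [Semigroup S] : ℕ∞ :=
  sSup {e : ℕ∞ | ∃ n : ℕ, e = (n : ℕ∞) ∧ ∃ M : SgModule S, Nontrivial (M.cohomology n)}

def IsFreeSemigroup (T : Type) [Semigroup T] : Prop :=
  ∃ X : Type, Nonempty (T ≃* FreeSemigroup X)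


/-- The semigroup `S = ⟨a, b, c, d ∣ ab = cd⟩`: the quotient of the free
semigroup on four generators by the congruence generated by `ab = cd`. -/
def relAbCd : Con (FreeSemigroup (Fin 4)) :=
  conGen (fun p q => p = FreeSemigroup.of 0 * FreeSemigroup.of 1 ∧
    q = FreeSemigroup.of 2 * FreeSemigroup.of 3)

theorem altSign_of_even {A : Type} [AddCommGroup A] {k : ℕ} (hk : Even k) (a : A) :
    altSign k a = a :=
  if_pos hk

theorem altSign_of_odd {A : Type} [AddCommGroup A] {k : ℕ} (hk : Odd k) (a : A) :
    altSign k a = -a :=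
  if_neg (Nat.not_even_iff_odd.mpr hk)

namespace Con

variable {M P : Type} [Mul M] [Mul P]

def liftMulHom (c : Con M) (f : M →ₙ* P) (H : c ≤ ker f) : c.Quotient →ₙ* P where
  toFun q := Con.liftOn q f H
  map_mul' x y := Con.induction_on₂ x y fun u v => map_mul f u v

theorem mulHom_ext {c : Con M} {f g : c.Quotient →ₙ* P} (h : ∀ x : M, f x = g x) : f = g :=
  MulHom.ext fun q => Con.induction_on q h

end Con

namespace SgModule

variable {S : Type} [Semigroup S] (M : SgModule S)

def smulHom (s : S) : M.carrier →+ M.carrier :=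
  AddMonoidHom.mk' (M.smul s) (M.smul_add s)

theorem smul_zero (s : S) : M.smul s 0 = 0 :=
  (M.smulHom s).map_zero

theorem smul_sub (s : S) (a b : M.carrier) : M.smul s (a - b) = M.smul s a - M.smul s b :=
  (M.smulHom s).map_sub a b

def IsTwoCocycle (F : S → S → M.carrier) : Prop :=
  ∀ x y z, M.smul x (F y z) - F (x * y) z + F x (y * z) - F x y = 0

def twoCoboundary (g : S → M.carrier) (x y : S) : M.carrier :=
  M.smul x (g y) - g (x * y) + g x

theorem twoCoboundary_add (g h : S → M.carrier) :
    M.twoCoboundary (g + h) = M.twoCoboundary g + M.twoCoboundary h := by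
  funext x y
  simp only [twoCoboundary, Pi.add_apply, M.smul_add]
  abel

theorem isTwoCocycle_twoCoboundary (g : S → M.carrier) :
    M.IsTwoCocycle (M.twoCoboundary g) := by
  intro x y z
  simp only [twoCoboundary, M.smul_add, M.smul_sub, ← M.mul_smul, mul_assoc]
  abel

theorem IsTwoCocycle.sub {M : SgModule S} {F G : S → S → M.carrier} (hF : M.IsTwoCocycle F)
    (hG : M.IsTwoCocycle G) : M.IsTwoCocycle (F - G) := by
  intro x y z
  have := congrArg₂ (· - ·) (hF x y z) (hG x y z)
  simp only [Pi.sub_apply, M.smul_sub, sub_zero] at this ⊢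
  rw [← this]
  abel

theorem cob_one_apply (g : M.cochain 1) (x y : S) :
    M.cob 1 g ![x, y] = M.twoCoboundary (fun s => g ![s]) x y := by
  have h_tail : Fin.tail ![x, y] = ![y] := by funext i; fin_cases i; rfl
  have h_contract : mulContract ![x, y] 0 = ![x * y] := by
    funext i; fin_cases i; simp [mulContract]
  have h_init : Fin.init ![x, y] = ![x] := by funext i; fin_cases i; rfl
  change M.cobFun g _ = _
  simp only [cobFun, Fin.sum_univ_one, h_tail, h_contract, h_init, twoCoboundary,
    Matrix.cons_val_zero]
  rw [altSign_of_odd (by decide), altSign_of_even (by decide)]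
  abel

theorem cob_two_apply (f : M.cochain 2) (x y z : S) :
    M.cob 2 f ![x, y, z]
      = M.smul x (f ![y, z]) - f ![x * y, z] + f ![x, y * z] - f ![x, y] := by
  have h_tail : Fin.tail ![x, y, z] = ![y, z] := by funext i; fin_cases i <;> rfl
  have h_contract₀ : mulContract ![x, y, z] 0 = ![x * y, z] := by
    funext i; fin_cases i <;> simp [mulContract]
  have h_contract₁ : mulContract ![x, y, z] 1 = ![x, y * z] := by
    funext i; fin_cases i <;> simp [mulContract]
  have h_init : Fin.init ![x, y, z] = ![x, y] := by funext i; fin_cases i <;> rfl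
  change M.cobFun f _ = _
  simp only [cobFun, Fin.sum_univ_two, h_tail, h_contract₀, h_contract₁, h_init,
    Matrix.cons_val_zero]
  rw [altSign_of_odd (by decide), altSign_of_even (by decide), altSign_of_odd (by decide)]
  abel

theorem mem_cocycles_two_iff (f : M.cochain 2) :
    f ∈ M.cocycles 2 ↔ M.IsTwoCocycle (fun x y => f ![x, y]) := by
  refine ⟨fun hf x y z => ?_, fun hf => ?_⟩
  · rw [← M.cob_two_apply]
    exact congrFun hf _
  · change M.cob 2 f = 0
    funext v
    have hv : v = ![v 0, v 1, v 2] := by funext i; fin_cases i <;> rfl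
    rw [hv, M.cob_two_apply]
    exact hf _ _ _

theorem mem_cobounds_two_of_eq_twoCoboundary {f : M.cochain 2} {g : S → M.carrier}
    (hfg : (fun x y => f ![x, y]) = M.twoCoboundary g) : f ∈ M.cobounds 2 := by
  refine ⟨fun v => g (v 0), funext fun v => ?_⟩
  have hv : v = ![v 0, v 1] := by funext i; fin_cases i <;> rfl
  rw [hv, M.cob_one_apply]
  exact (congrFun₂ hfg _ _).symm

theorem subsingleton_cohomology_of_cocycles_le {n : ℕ} (h : M.cocycles n ≤ M.cobounds n) :
    Subsingleton (M.cohomology n) := by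
  unfold cohomology
  rw [AddSubgroup.addSubgroupOf_eq_top.mpr h]
  exact QuotientAddGroup.subsingleton_quotient_top

@[ext]
structure Extension (F : S → S → M.carrier) (_hF : M.IsTwoCocycle F) where
  fst : M.carrier
  snd : S

namespace Extension

variable {M} {F : S → S → M.carrier} {hF : M.IsTwoCocycle F}

instance : Mul (M.Extension F hF) :=
  ⟨fun p q => ⟨p.fst + M.smul p.snd q.fst - F p.snd q.snd, p.snd * q.snd⟩⟩

@[simp]
theorem mul_fst (p q : M.Extension F hF) :
    (p * q).fst = p.fst + M.smul p.snd q.fst - F p.snd q.snd :=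
  rfl

@[simp]
theorem mul_snd (p q : M.Extension F hF) : (p * q).snd = p.snd * q.snd :=
  rfl

instance : Semigroup (M.Extension F hF) where
  mul_assoc p q r := by
    ext
    · simp only [mul_fst, mul_snd, M.smul_add, M.smul_sub, M.mul_smul]
      rw [← sub_eq_zero, ← hF p.snd q.snd r.snd]
      abel
    · exact mul_assoc _ _ _

def sndHom : M.Extension F hF →ₙ* S where
  toFun := snd
  map_mul' _ _ := rfl

theorem eq_twoCoboundary_of_section (σ : S →ₙ* M.Extension F hF)
    (hσ : ∀ s, (σ s).snd = s) : F = M.twoCoboundary (fun s => (σ s).fst) := by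
  funext x y
  have h := congrArg fst (map_mul σ x y)
  rw [mul_fst, hσ, hσ] at h
  rw [twoCoboundary, h]
  abel

end Extension

end SgModule

namespace relAbCd

open FreeSemigroup

def gen (i : Fin 4) : relAbCd.Quotient :=
  (of i : FreeSemigroup (Fin 4))

theorem gen_mul_gen : gen 0 * gen 1 = gen 2 * gen 3 :=
  (Con.eq relAbCd).mpr (ConGen.Rel.of _ _ ⟨rfl, rfl⟩)

variable {T : Type} [Semigroup T]

def lift (t : Fin 4 → T) (ht : t 0 * t 1 = t 2 * t 3) : relAbCd.Quotient →ₙ* T :=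
  relAbCd.liftMulHom (FreeSemigroup.lift t) <| Con.conGen_le.mpr <| by
    rintro _ _ ⟨rfl, rfl⟩
    simpa only [Con.ker_rel, map_mul, lift_of] using ht

theorem hom_ext {f g : relAbCd.Quotient →ₙ* T} (h : ∀ i, f (gen i) = g (gen i)) : f = g :=
  Con.mulHom_ext <| DFunLike.congr_fun <|
    FreeSemigroup.hom_ext (f := f.comp (relAbCd.mkMulHom)) (g := g.comp (relAbCd.mkMulHom))
      (funext h)

theorem gen_ne_gen_zero {i : Fin 4} (hi : i ≠ 0) : gen i ≠ gen 0 := by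
  -- additive weights with `w a + w b = w c + w d` that separate `a` from `b`, `c`, `d`
  let weight (j : Fin 4) : Multiplicative (ℕ × ℕ) :=
    .ofAdd (![(1, 1), (0, 0), (1, 0), (0, 1)] j)
  intro h
  have h_weight : weight i = weight 0 := congrArg (lift weight rfl) h
  revert h_weight
  fin_cases i <;> first | exact absurd rfl hi | decide

variable {M : SgModule relAbCd.Quotient}

theorem exists_eq_twoCoboundary_of_apply_eq
    {F : relAbCd.Quotient → relAbCd.Quotient → M.carrier} (hF : M.IsTwoCocycle F)
    (habcd : F (gen 0) (gen 1) = F (gen 2) (gen 3)) :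
    ∃ g, F = M.twoCoboundary g := by
  let σ : relAbCd.Quotient →ₙ* M.Extension F hF :=
    lift (fun i => ⟨0, gen i⟩) <| by
      ext
      · simp only [SgModule.Extension.mul_fst, M.smul_zero, habcd]
      · exact gen_mul_gen
  have hσ : SgModule.Extension.sndHom.comp σ = MulHom.id _ := hom_ext fun _ => rfl
  exact ⟨_, SgModule.Extension.eq_twoCoboundary_of_section σ (DFunLike.congr_fun hσ)⟩

theorem exists_eq_twoCoboundary {F : relAbCd.Quotient → relAbCd.Quotient → M.carrier}
    (hF : M.IsTwoCocycle F) : ∃ g, F = M.twoCoboundary g := by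
  classical
  let δ : relAbCd.Quotient → M.carrier :=
    Pi.single (gen 0) (F (gen 0) (gen 1) - F (gen 2) (gen 3))
  have hδ : ∀ i ≠ 0, δ (gen i) = 0 := fun i hi => Pi.single_eq_of_ne (gen_ne_gen_zero hi) _
  obtain ⟨g, hg⟩ := exists_eq_twoCoboundary_of_apply_eq
    (hF.sub (M.isTwoCocycle_twoCoboundary δ)) <| by
      simp only [Pi.sub_apply, SgModule.twoCoboundary, gen_mul_gen, hδ 1 (by decide),
        hδ 2 (by decide), hδ 3 (by decide), M.smul_zero, δ, Pi.single_eq_same]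
      abel
  exact ⟨g + δ, by rw [M.twoCoboundary_add, ← hg, sub_add_cancel]⟩

end relAbCd

/-- For `S = ⟨a, b, c, d ∣ ab = cd⟩` one has `H²(S, A) = 0`
for every `S`-module `A`. -/
theorem H2_of_ab_eq_cd_trivial (M : SgModule relAbCd.Quotient) :
    Subsingleton (M.cohomology 2) :=
  M.subsingleton_cohomology_of_cocycles_le fun f hf =>
    have ⟨_, hg⟩ := relAbCd.exists_eq_twoCoboundary ((M.mem_cocycles_two_iff f).mp hf)
    M.mem_cobounds_two_of_eq_twoCoboundary hg
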